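/- arXiv:1908.06879 — 3 statements merged into one kernel-verified Lean document; each statement's English description precedes it below -/
import Mathlib

section
/- Let C be a locally presentable category with a cofibrantly generated weak factorization system (L, R) such that ∅ → X lies in L for every object X, equipped with an exact cylinder I and a class An(I) of right I-anodyne extensions. Then every right I-anodyne extension f : A → B is a weak equivalence, i.e., for every right I-fibrant object W the induced map f* : [B, W]_I → [A, W]_I is bijective. -/
set_option linter.unusedSectionVars false

open CategoryTheory CategoryTheory.Limits

universe v u

namespace Paper

variable {C : Type u} [Category.{v} C]

/-- The class of morphisms having the left lifting property against every morphism in `T`. -/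
def llp (T : MorphismProperty C) : MorphismProperty C :=
  fun _ _ f => ∀ ⦃X Y : C⦄ (g : X ⟶ Y), T g → HasLiftingProperty f g

/-- The class of morphisms having the right lifting property against every morphism in `T`. -/
def rlp (T : MorphismProperty C) : MorphismProperty C :=
  fun _ _ g => ∀ ⦃A B : C⦄ (f : A ⟶ B), T f → HasLiftingProperty f g

/-- The morphism property associated to a set of arrows. -/
def ofArrows (S : Set (Arrow C)) : MorphismProperty C :=
  fun _ _ f => Arrow.mk f ∈ S

/-- A (possibly large) category `J` is `κ`-filtered if every diagram in `J` indexed by a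
small category of size `< κ` admits a cocone. -/
def IsCardinalFiltered (J : Cat.{v, v}) (κ : Cardinal.{v}) : Prop :=
  ∀ K : Cat.{v, v}, Cardinal.mk (Arrow K) < κ → ∀ F : K ⥤ J, Nonempty (Cocone F)

/-- An object `X` is `κ`-presentable if `Hom(X, -)` preserves colimits of `κ`-filtered
diagrams. -/
def IsPresentableObj (κ : Cardinal.{v}) (X : C) : Prop :=
  ∀ J : Cat.{v, v}, IsCardinalFiltered J κ →
    PreservesColimitsOfShape J (coyoneda.obj (Opposite.op X))

/-- A category is locally presentable if it is cocomplete and there is a regular cardinal `κ`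
and a small family of `κ`-presentable objects such that every object is a `κ`-filtered colimit
of objects of the family. -/
class LocallyPresentable (C : Type u) [Category.{v} C] extends HasColimits C : Prop where
  exists_presentable_generator :
    ∃ κ : Cardinal.{v}, κ.IsRegular ∧
      ∃ (ι : Type v) (G : ι → C), (∀ i, IsPresentableObj κ (G i)) ∧
        ∀ X : C, ∃ (J : Cat.{v, v}) (F : J ⥤ C) (c : Cocone F),
          IsCardinalFiltered J κ ∧ Nonempty (IsColimit c) ∧
          (∀ j : J, ∃ i, Nonempty (F.obj j ≅ G i)) ∧ Nonempty (c.pt ≅ X)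

/-- `(L, R)` is a cofibrantly generated weak factorization system such that every morphism
from the initial object is in `L`. -/
structure IsCofGenWFS [HasColimits C] (L R : MorphismProperty C) : Prop where
  exists_generating_set : ∃ S : Set (Arrow C), Small.{v} S ∧ L = llp (rlp (ofArrows S))
  rlp_eq : R = rlp L
  factorization : ∀ ⦃X Y : C⦄ (f : X ⟶ Y),
    ∃ (Z : C) (i : X ⟶ Z) (p : Z ⟶ Y), L i ∧ R p ∧ i ≫ p = f
  initial_mem : ∀ X : C, L (initial.to X)

/-- A functorial cylinder on `C`. -/
structure Cylinder (C : Type u) [Category.{v} C] where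
  I : C ⥤ C
  d0 : 𝟭 C ⟶ I
  d1 : 𝟭 C ⟶ I
  σ : I ⟶ 𝟭 C
  d0_σ : ∀ X : C, d0.app X ≫ σ.app X = 𝟙 X
  d1_σ : ∀ X : C, d1.app X ≫ σ.app X = 𝟙 X

namespace Cylinder

variable (E : Cylinder C)

lemma d0_naturality' {K M : C} (f : K ⟶ M) :
    f ≫ E.d0.app M = E.d0.app K ≫ E.I.map f := by
  simpa using E.d0.naturality f

lemma d1_naturality' {K M : C} (f : K ⟶ M) :
    f ≫ E.d1.app M = E.d1.app K ≫ E.I.map f := by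
  simpa using E.d1.naturality f

variable [HasColimits C]

/-- The canonical map `X ⊔ X ⟶ I(X)`. -/
noncomputable def ι (X : C) : X ⨿ X ⟶ E.I.obj X :=
  coprod.desc (E.d0.app X) (E.d1.app X)

lemma ι_naturality {K M : C} (f : K ⟶ M) :
    coprod.map f f ≫ E.ι M = E.ι K ≫ E.I.map f := by
  have h0 := E.d0.naturality f
  have h1 := E.d1.naturality f
  simp only [Functor.id_map] at h0 h1
  apply coprod.hom_ext <;> simp [ι, h0, h1]

/-- The pushout-corner map `∂I ⊠ f : (M ⊔ M) ⊔_{K ⊔ K} I(K) ⟶ I(M)`. -/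
noncomputable def boundaryBox {K M : C} (f : K ⟶ M) :
    pushout (coprod.map f f) (E.ι K) ⟶ E.I.obj M :=
  pushout.desc (E.ι M) (E.I.map f) (E.ι_naturality f)

/-- The pushout-corner map `∂0 ⊠ f : M ⊔_K I(K) ⟶ I(M)`. -/
noncomputable def box0 {K M : C} (f : K ⟶ M) :
    pushout f (E.d0.app K) ⟶ E.I.obj M :=
  pushout.desc (E.d0.app M) (E.I.map f) (E.d0_naturality' f)

/-- The pushout-corner map `∂1 ⊠ f : M ⊔_K I(K) ⟶ I(M)`. -/
noncomputable def box1 {K M : C} (f : K ⟶ M) :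
    pushout f (E.d1.app K) ⟶ E.I.obj M :=
  pushout.desc (E.d1.app M) (E.I.map f) (E.d1_naturality' f)

end Cylinder

/-- A cylinder is exact with respect to the class `L` if it preserves small colimits,
the maps `X ⊔ X ⟶ I(X)` are in `L`, and the pushout-corner maps of morphisms of `L` are
again in `L`. -/
structure IsExactCylinder [HasColimits C] (E : Cylinder C) (L : MorphismProperty C) : Prop where
  preservesColimits : PreservesColimits E.I
  ι_mem : ∀ X : C, L (E.ι X)
  boundaryBox_mem : ∀ ⦃K M : C⦄ (f : K ⟶ M), L f → L (E.boundaryBox f)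
  box0_mem : ∀ ⦃K M : C⦄ (f : K ⟶ M), L f → L (E.box0 f)
  box1_mem : ∀ ⦃K M : C⦄ (f : K ⟶ M), L f → L (E.box1 f)

/-- `An` is a class of right `I`-anodyne extensions. -/
structure IsRightAnodyneClass [HasColimits C] (E : Cylinder C) (L : MorphismProperty C)
    (An : MorphismProperty C) : Prop where
  le : An ≤ L
  exists_generating_set : ∃ Λ : Set (Arrow C), Small.{v} Λ ∧ ofArrows Λ ≤ L ∧
    An = llp (rlp (ofArrows Λ))
  box1_mem : ∀ ⦃K M : C⦄ (f : K ⟶ M), L f → An (E.box1 f)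
  boundaryBox_mem : ∀ ⦃K M : C⦄ (f : K ⟶ M), An f → An (E.boundaryBox f)

/-- `An` is a class of left `I`-anodyne extensions. -/
structure IsLeftAnodyneClass [HasColimits C] (E : Cylinder C) (L : MorphismProperty C)
    (An : MorphismProperty C) : Prop where
  le : An ≤ L
  exists_generating_set : ∃ Λ : Set (Arrow C), Small.{v} Λ ∧ ofArrows Λ ≤ L ∧
    An = llp (rlp (ofArrows Λ))
  box0_mem : ∀ ⦃K M : C⦄ (f : K ⟶ M), L f → An (E.box0 f)
  boundaryBox_mem : ∀ ⦃K M : C⦄ (f : K ⟶ M), An f → An (E.boundaryBox f)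

/-- A morphism is an `An`-fibration if it has the right lifting property against all
morphisms of `An`. -/
def IsFib (An : MorphismProperty C) {X Y : C} (p : X ⟶ Y) : Prop :=
  ∀ ⦃A B : C⦄ (f : A ⟶ B), An f → HasLiftingProperty f p

/-- An object `W` is `An`-fibrant if the map `W ⟶ *` has the right lifting property against
all morphisms of `An`, i.e. every morphism to `W` extends along every morphism of `An`. -/
def IsFibrantObj (An : MorphismProperty C) (W : C) : Prop :=
  ∀ ⦃A B : C⦄ (f : A ⟶ B), An f → ∀ a : A ⟶ W, ∃ b : B ⟶ W, f ≫ b = a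

namespace Cylinder

variable (E : Cylinder C)

/-- An `I`-homotopy from `f` to `g`. -/
def Homotopy {X Y : C} (f g : X ⟶ Y) : Prop :=
  ∃ h : E.I.obj X ⟶ Y, E.d0.app X ≫ h = f ∧ E.d1.app X ≫ h = g

/-- `[X, Y]_I`, the quotient of `Hom(X, Y)` by the equivalence relation generated by
`I`-homotopy. -/
def HoHom (X Y : C) : Type v :=
  Quot (fun f g : X ⟶ Y => E.Homotopy f g)

/-- Precomposition `f^* : [B, W]_I ⟶ [A, W]_I`. -/
def precompQ {A B : C} (f : A ⟶ B) (W : C) : E.HoHom B W → E.HoHom A W :=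
  Quot.lift (fun g => Quot.mk _ (f ≫ g)) (by
    rintro g g' ⟨h, h0, h1⟩
    apply Quot.sound
    refine ⟨E.I.map f ≫ h, ?_, ?_⟩
    · rw [← Category.assoc, ← E.d0_naturality' f, Category.assoc, h0]
    · rw [← Category.assoc, ← E.d1_naturality' f, Category.assoc, h1])

end Cylinder

/-- `f` is a weak equivalence if it induces bijections `[B, W]_I ≅ [A, W]_I` for all
fibrant `W`. -/
def IsWeakEq (E : Cylinder C) (An : MorphismProperty C) {A B : C} (f : A ⟶ B) : Prop :=
  ∀ W : C, IsFibrantObj An W → Function.Bijective (E.precompQ f W)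

/-- `f` is a retract of `f'`. -/
def IsRetractOf {X Y X' Y' : C} (f : X ⟶ Y) (f' : X' ⟶ Y') : Prop :=
  ∃ (i : X ⟶ X') (r : X' ⟶ X) (j : Y ⟶ Y') (s : Y' ⟶ Y),
    i ≫ r = 𝟙 X ∧ j ≫ s = 𝟙 Y ∧ i ≫ f' = f ≫ j ∧ f' ≫ s = r ≫ f

/-- A model structure on a category: the classes of weak equivalences, cofibrations and
fibrations, subject to the two-out-of-three, retract, lifting and factorization axioms. -/
structure ModelStructure (C : Type u) [Category.{v} C] where
  weq : MorphismProperty C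
  cof : MorphismProperty C
  fib : MorphismProperty C
  weq_id : ∀ X : C, weq (𝟙 X)
  weq_comp : ∀ ⦃X Y Z : C⦄ (f : X ⟶ Y) (g : Y ⟶ Z), weq f → weq g → weq (f ≫ g)
  weq_cancel_left : ∀ ⦃X Y Z : C⦄ (f : X ⟶ Y) (g : Y ⟶ Z), weq f → weq (f ≫ g) → weq g
  weq_cancel_right : ∀ ⦃X Y Z : C⦄ (f : X ⟶ Y) (g : Y ⟶ Z), weq g → weq (f ≫ g) → weq f
  weq_retract : ∀ ⦃X Y X' Y' : C⦄ (f : X ⟶ Y) (f' : X' ⟶ Y'),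
    IsRetractOf f f' → weq f' → weq f
  cof_retract : ∀ ⦃X Y X' Y' : C⦄ (f : X ⟶ Y) (f' : X' ⟶ Y'),
    IsRetractOf f f' → cof f' → cof f
  fib_retract : ∀ ⦃X Y X' Y' : C⦄ (f : X ⟶ Y) (f' : X' ⟶ Y'),
    IsRetractOf f f' → fib f' → fib f
  lift_trivCof_fib : ∀ ⦃A B X Y : C⦄ (i : A ⟶ B) (p : X ⟶ Y),
    cof i → weq i → fib p → HasLiftingProperty i p
  lift_cof_trivFib : ∀ ⦃A B X Y : C⦄ (i : A ⟶ B) (p : X ⟶ Y),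
    cof i → fib p → weq p → HasLiftingProperty i p
  fact_cof_trivFib : ∀ ⦃X Y : C⦄ (f : X ⟶ Y),
    ∃ (Z : C) (i : X ⟶ Z) (p : Z ⟶ Y), cof i ∧ fib p ∧ weq p ∧ i ≫ p = f
  fact_trivCof_fib : ∀ ⦃X Y : C⦄ (f : X ⟶ Y),
    ∃ (Z : C) (i : X ⟶ Z) (p : Z ⟶ Y), cof i ∧ weq i ∧ fib p ∧ i ≫ p = f

/-- An object `W` is fibrant for a model structure if every morphism to `W` extends along
every trivial cofibration, i.e. `W ⟶ *` has the right lifting property against trivial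
cofibrations. -/
def ModelStructure.Fibrant (M : ModelStructure C) (W : C) : Prop :=
  ∀ ⦃A B : C⦄ (i : A ⟶ B), M.cof i → M.weq i → ∀ a : A ⟶ W, ∃ b : B ⟶ W, i ≫ b = a

/-! Surjectivity of `f^*` is the extension property of `W` along `f`. For injectivity, a
homotopy `f ≫ g ∼ f ≫ g'` glued with `g ⊔ g'` is a map out of the domain of `∂I ⊠ f`; as
`∂I ⊠ f` is again anodyne, it extends over `I(B)`, which is a homotopy `g ∼ g'`. A zigzag of
homotopies between maps `A ⟶ W` lifts step by step, because every map `A ⟶ W` extends along `f`. -/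

theorem _root_.Relation.EqvGen.of_map_of_surjective {α β : Type*} {r : α → α → Prop}
    {s : β → β → Prop} {φ : β → α} (hφ : Function.Surjective φ) (hr : ∀ a, r a a)
    (h : ∀ x y, r (φ x) (φ y) → s x y) {x y : β} (hxy : Relation.EqvGen r (φ x) (φ y)) :
    Relation.EqvGen s x y := by
  suffices ∀ a b, Relation.EqvGen r a b → ∀ x y, φ x = a → φ y = b → Relation.EqvGen s x y from
    this _ _ hxy x y rfl rfl
  intro a b hab
  induction hab with
  | rel a b hab => rintro x y rfl rfl; exact .rel _ _ (h x y hab)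
  | refl a => rintro x y rfl hy; exact .rel _ _ (h x y (hy ▸ hr _))
  | symm a b _ ih => intro x y hx hy; exact .symm _ _ (ih y x hy hx)
  | trans a b c _ _ ih₁ ih₂ =>
    intro x y hx hy
    obtain ⟨z, rfl⟩ := hφ b
    exact .trans _ _ _ (ih₁ x z hx rfl) (ih₂ z y rfl hy)

lemma IsFibrantObj.precomp_surjective {An : MorphismProperty C} {W : C} (hW : IsFibrantObj An W)
    {A B : C} {f : A ⟶ B} (hf : An f) : Function.Surjective fun g : B ⟶ W => f ≫ g :=
  hW f hf

namespace Cylinder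

variable (E : Cylinder C)

lemma homotopy_refl {X Y : C} (g : X ⟶ Y) : E.Homotopy g g :=
  ⟨E.σ.app X ≫ g, by simp [reassoc_of% E.d0_σ X], by simp [reassoc_of% E.d1_σ X]⟩

variable [HasColimits C]

lemma homotopy_of_ι_comp {X Y : C} {g g' : X ⟶ Y} (H : E.I.obj X ⟶ Y)
    (hH : E.ι X ≫ H = coprod.desc g g') : E.Homotopy g g' := by
  have h₀ := coprod.inl ≫= hH
  have h₁ := coprod.inr ≫= hH
  rw [ι, coprod.inl_desc_assoc, coprod.inl_desc] at h₀
  rw [ι, coprod.inr_desc_assoc, coprod.inr_desc] at h₁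
  exact ⟨H, h₀, h₁⟩

lemma homotopy_of_homotopy_comp {An : MorphismProperty C} {W : C} (hW : IsFibrantObj An W)
    {A B : C} {f : A ⟶ B} (hf : An (E.boundaryBox f)) {g g' : B ⟶ W}
    (hfg : E.Homotopy (f ≫ g) (f ≫ g')) : E.Homotopy g g' := by
  obtain ⟨h, h₀, h₁⟩ := hfg
  have hsq : coprod.map f f ≫ coprod.desc g g' = E.ι A ≫ h := by
    ext <;> simp [ι, h₀, h₁]
  obtain ⟨H, hH⟩ := hW _ hf (pushout.desc _ _ hsq)
  refine E.homotopy_of_ι_comp H ?_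
  rw [← pushout.inl_desc (E.ι B) (E.I.map f) (E.ι_naturality f), Category.assoc]
  exact (pushout.inl _ _ ≫= hH).trans (pushout.inl_desc _ _ _)

lemma precompQ_mk {A B W : C} (f : A ⟶ B) (g : B ⟶ W) :
    E.precompQ f W (Quot.mk _ g) = Quot.mk _ (f ≫ g) :=
  rfl

lemma precompQ_surjective {An : MorphismProperty C} {W : C} (hW : IsFibrantObj An W)
    {A B : C} {f : A ⟶ B} (hf : An f) : Function.Surjective (E.precompQ f W) := by
  refine Quot.ind fun a => ?_
  obtain ⟨b, rfl⟩ := hW.precomp_surjective hf a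
  exact ⟨Quot.mk _ b, E.precompQ_mk f b⟩

lemma precompQ_injective {An : MorphismProperty C} {W : C} (hW : IsFibrantObj An W)
    {A B : C} {f : A ⟶ B} (hf : An f) (hbf : An (E.boundaryBox f)) :
    Function.Injective (E.precompQ f W) := by
  refine Quot.ind fun g => Quot.ind fun g' hgg' => Quot.eq.2 ?_
  exact .of_map_of_surjective (hW.precomp_surjective hf) E.homotopy_refl
    (fun _ _ => E.homotopy_of_homotopy_comp hW hbf) (Quot.eq.1 hgg')

end Cylinder

theorem statement_4_general    {C : Type u} [Category.{v} C] [LocallyPresentable C]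
    (L : MorphismProperty C)
    (E : Cylinder C)
    (An : MorphismProperty C) (hAn : IsRightAnodyneClass E L An)
    ⦃A B : C⦄ (f : A ⟶ B) (hf : An f) :
    IsWeakEq E An f := fun _ hW =>
  ⟨E.precompQ_injective hW hf (hAn.boundaryBox_mem f hf), E.precompQ_surjective hW hf⟩

/-- Proposition 2.19 (anodyneequivalence): every right `I`-anodyne extension is a weak
equivalence. -/
theorem statement_4    {C : Type u} [Category.{v} C] [LocallyPresentable C]
    (L R : MorphismProperty C) (hW : IsCofGenWFS L R)
    (E : Cylinder C) (hE : IsExactCylinder E L)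
    (An : MorphismProperty C) (hAn : IsRightAnodyneClass E L An)
    ⦃A B : C⦄ (f : A ⟶ B) (hf : An f) :
    IsWeakEq E An f :=
  statement_4_general L E An hAn (A := A) (B := B) f hf

end Paper
end

section
/- Let C be a locally presentable category with a cofibrantly generated weak factorization system (L, R) such that ∅ → X lies in L for every object X, equipped with an exact cylinder I and a class An(I) of right I-anodyne extensions. Then a right I-fibration lies in the class R if and only if it is the dual of a right deformation retract. -/
set_option linter.unusedSectionVars false

open CategoryTheory CategoryTheory.Limits

universe v u

namespace Paper

variable {C : Type u} [Category.{v} C]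

/-- `r : X ⟶ A` is the dual of a right deformation retract. -/
def Cylinder.IsDualRightDefRetract (E : Cylinder C) {X A : C} (r : X ⟶ A) : Prop :=
  ∃ (i : A ⟶ X) (h : E.I.obj X ⟶ X),
    i ≫ r = 𝟙 A ∧ E.d0.app X ≫ h = 𝟙 X ∧ E.d1.app X ≫ h = r ≫ i ∧
    h ≫ r = E.σ.app X ≫ r

namespace Cylinder

variable (E : Cylinder C)

lemma σ_naturality' {K M : C} (f : K ⟶ M) :
    E.I.map f ≫ E.σ.app M = E.σ.app K ≫ f := by
  simp

variable [HasColimits C]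

@[simp]
lemma inl_ι (X : C) : coprod.inl ≫ E.ι X = E.d0.app X :=
  coprod.inl_desc _ _

@[simp]
lemma inr_ι (X : C) : coprod.inr ≫ E.ι X = E.d1.app X :=
  coprod.inr_desc _ _

@[simp]
lemma inl_box1 {K M : C} (f : K ⟶ M) : pushout.inl f (E.d1.app K) ≫ E.box1 f = E.d1.app M :=
  pushout.inl_desc _ _ _

@[simp]
lemma inr_box1 {K M : C} (f : K ⟶ M) : pushout.inr f (E.d1.app K) ≫ E.box1 f = E.I.map f :=
  pushout.inr_desc _ _ _

theorem isDualRightDefRetract_of_hasLiftingProperty {X Y : C} (p : X ⟶ Y)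
    [HasLiftingProperty (initial.to Y) p] [HasLiftingProperty (E.ι X) p] :
    E.IsDualRightDefRetract p := by
  have sec : CommSq (initial.to X) (initial.to Y) p (𝟙 Y) := ⟨initial.hom_ext _ _⟩
  have hip : sec.lift ≫ p = 𝟙 Y := sec.fac_right
  have htpy : CommSq (coprod.desc (𝟙 X) (p ≫ sec.lift)) (E.ι X) p (E.σ.app X ≫ p) := by
    constructor
    ext
    · rw [coprod.inl_desc_assoc, reassoc_of% E.inl_ι, reassoc_of% E.d0_σ, Category.id_comp]
    · rw [coprod.inr_desc_assoc, reassoc_of% E.inr_ι, reassoc_of% E.d1_σ, Category.assoc, hip,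
        Category.comp_id]
  refine ⟨sec.lift, htpy.lift, hip, ?_, ?_, htpy.fac_right⟩
  · rw [← E.inl_ι, Category.assoc, htpy.fac_left, coprod.inl_desc]
  · rw [← E.inr_ι, Category.assoc, htpy.fac_left, coprod.inr_desc]

/-- Given a square from `f` to `p`, the deformation `h` extends it to a square from `∂1 ⊠ f`
to `p`; restricting a lift `I(B) ⟶ X` of the latter along `∂0` lifts the former. -/
theorem hasLiftingProperty_of_isDualRightDefRetract {X Y : C} {p : X ⟶ Y}
    (hp : E.IsDualRightDefRetract p) {A B : C} (f : A ⟶ B)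
    [HasLiftingProperty (E.box1 f) p] : HasLiftingProperty f p := by
  obtain ⟨i, h, hip, h0, h1, hhp⟩ := hp
  refine ⟨fun {a b} sq => ?_⟩
  have hw : f ≫ b ≫ i = E.d1.app A ≫ E.I.map a ≫ h := by
    rw [← reassoc_of% E.d1_naturality' a, h1, reassoc_of% sq.w]
  have sq' : CommSq (pushout.desc (b ≫ i) (E.I.map a ≫ h) hw) (E.box1 f) p
      (E.σ.app B ≫ b) := by
    constructor
    ext
    · rw [pushout.inl_desc_assoc, reassoc_of% E.inl_box1, reassoc_of% E.d1_σ, Category.assoc, hip,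
        Category.comp_id]
    · rw [pushout.inr_desc_assoc, reassoc_of% E.inr_box1, Category.assoc, hhp,
        reassoc_of% E.σ_naturality' a, reassoc_of% E.σ_naturality' f, sq.w]
  have hI : E.I.map f ≫ sq'.lift = E.I.map a ≫ h := by
    rw [← E.inr_box1, Category.assoc, sq'.fac_left, pushout.inr_desc]
  refine ⟨⟨⟨E.d0.app B ≫ sq'.lift, ?_, ?_⟩⟩⟩
  · rw [reassoc_of% E.d0_naturality' f, hI, ← reassoc_of% E.d0_naturality' a, h0,
      Category.comp_id]
  · rw [Category.assoc, sq'.fac_right, reassoc_of% E.d0_σ B]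

end Cylinder

/-- Lemma 2.24: a right `I`-fibration is in `R` iff it is the dual of a right deformation
retract. -/
theorem statement_6    {C : Type u} [Category.{v} C] [LocallyPresentable C]
    (L R : MorphismProperty C) (hW : IsCofGenWFS L R)
    (E : Cylinder C) (hE : IsExactCylinder E L)
    (An : MorphismProperty C) (hAn : IsRightAnodyneClass E L An)
    ⦃X Y : C⦄ (p : X ⟶ Y) (hp : IsFib An p) :
    R p ↔ E.IsDualRightDefRetract p := by
  rw [hW.rlp_eq]
  constructor
  · intro hR
    have := hR _ (hW.initial_mem Y)
    have := hR _ (hE.ι_mem X)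
    exact E.isDualRightDefRetract_of_hasLiftingProperty p
  · intro hdr A B f hf
    have := hp _ (hAn.box1_mem f hf)
    exact E.hasLiftingProperty_of_isDualRightDefRetract hdr f

end Paper
end

section
/- Let C be a locally presentable category with a cofibrantly generated weak factorization system (L, R) such that ∅ → X lies in L for every object X, equipped with an exact cylinder I and a class An(I) of right I-anodyne extensions. Then a morphism of C is I-final if and only if it can be factored as a right I-anodyne extension followed by a morphism in the class R. -/
set_option linter.unusedSectionVars false

open CategoryTheory CategoryTheory.Limits

universe v u

namespace Paper

variable {C : Type u} [Category.{v} C]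

/-- Morphisms over `A` from `(X, u)` to `(W, q)`. -/
def OverHom {X W A : C} (u : X ⟶ A) (q : W ⟶ A) : Type v :=
  { g : X ⟶ W // g ≫ q = u }

namespace Cylinder

variable (E : Cylinder C)

/-- An `I`-homotopy over `A`. -/
def OverHomotopy {X W A : C} (u : X ⟶ A) (q : W ⟶ A)
    (g g' : OverHom u q) : Prop :=
  ∃ h : E.I.obj X ⟶ W, E.d0.app X ≫ h = g.1 ∧ E.d1.app X ≫ h = g'.1 ∧
    h ≫ q = E.σ.app X ≫ u

/-- Homotopy classes of morphisms over `A`, `[(X, u), (W, q)]_{I_A}`. -/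
def OverHoHom {X W A : C} (u : X ⟶ A) (q : W ⟶ A) : Type v :=
  Quot (E.OverHomotopy u q)

/-- Precomposition `[(Y, p), (W, q)]_{I_A} ⟶ [(X, f ≫ p), (W, q)]_{I_A}`. -/
def overPrecompQ {X Y A W : C} (f : X ⟶ Y) (p : Y ⟶ A) (q : W ⟶ A) :
    E.OverHoHom p q → E.OverHoHom (f ≫ p) q :=
  Quot.lift (fun g => Quot.mk _ ⟨f ≫ g.1, by rw [Category.assoc, g.2]⟩)
    (by
      rintro g g' ⟨h, h0, h1, hq⟩
      apply Quot.sound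
      refine ⟨E.I.map f ≫ h, ?_, ?_, ?_⟩
      · rw [← Category.assoc, ← E.d0_naturality' f, Category.assoc, h0]
      · rw [← Category.assoc, ← E.d1_naturality' f, Category.assoc, h1]
      · have hnat := E.σ.naturality f
        simp only [Functor.id_map] at hnat
        simp only [Category.assoc, hq]
        rw [← Category.assoc, hnat, Category.assoc])

end Cylinder

/-- A morphism `f : X ⟶ Y` is `I`-final if for every object `A`, every `p : Y ⟶ A` and
every right `I`-fibration `q : W ⟶ A`, the induced map
`[(Y, p), (W, q)]_{I_A} ⟶ [(X, f ≫ p), (W, q)]_{I_A}` is bijective. -/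
def IsFinal (E : Cylinder C) (An : MorphismProperty C) {X Y : C} (f : X ⟶ Y) : Prop :=
  ∀ (A : C) (p : Y ⟶ A) ⦃W : C⦄ (q : W ⟶ A), IsFib An q →
    Function.Bijective (E.overPrecompQ f p q)

/-!
Fibrewise homotopy over a base is an equivalence relation on maps into a right `I`-fibration,
because `∂I ⊠ ∂1` is right anodyne; so equal classes in `[(X, u), (W, q)]_{I_A}` are related
by a single homotopy, which can then be fed into lifting problems.

If `i` is right anodyne and `p ∈ R`, then `p` has a section `s` and a fibrewise homotopy
`𝟙 ~ p ≫ s` over the base (lift against `∅ → Y` and `Z ⊔ Z → I Z`). Injectivity of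
`(i ≫ p)^*` comes from lifting homotopies against `∂I ⊠ i` and restricting along `s`;
surjectivity from extending along `i` and correcting by the homotopy `𝟙 ~ p ≫ s`.

Conversely, factor an `I`-final `f` as `j ≫ p` with `j ∈ L` and `p ∈ R`. Finality of `f` against
`p` gives a section `t` of `p` and a fibrewise homotopy `H : f ≫ t ~ j`; a connection (a lift
against `∂1 ⊠ (X ⊔ X → I X)`) reverses `H` up to a 2-cell `Ξ`, and a lift against `∂I ⊠ j`
extends the reversed homotopy to a fibrewise deformation `K : 𝟙 ~ p ≫ t` of `Z`.
Transporting a map `u` along `H`, using finality of `f`, and transporting back along `K` shows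
that `j^*` is surjective on homotopy classes into every right fibration; `Ξ` identifies the
round trip with `u`. Finally, a map of `L` whose `j^*` is surjective lifts strictly against right
fibrations, by straightening the homotopy with a lift against `∂1 ⊠ j`, so `j` is right anodyne.
-/

section PreservesCoproduct

variable {D : Type*} [Category D] (F : C ⥤ D) {X Y : C} [HasBinaryCoproduct X Y]
  [PreservesColimit (pair X Y) F]

lemma _root_.CategoryTheory.Functor.exists_map_coprod_desc {Z : D} (a : F.obj X ⟶ Z)
    (b : F.obj Y ⟶ Z) :
    ∃ h : F.obj (X ⨿ Y) ⟶ Z, F.map coprod.inl ≫ h = a ∧ F.map coprod.inr ≫ h = b :=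
  let hc := isColimitOfHasBinaryCoproductOfPreservesColimit F X Y
  ⟨BinaryCofan.IsColimit.desc hc a b, BinaryCofan.IsColimit.inl_desc hc a b,
    BinaryCofan.IsColimit.inr_desc hc a b⟩

lemma _root_.CategoryTheory.Functor.map_coprod_hom_ext {Z : D} {φ ψ : F.obj (X ⨿ Y) ⟶ Z}
    (h₀ : F.map coprod.inl ≫ φ = F.map coprod.inl ≫ ψ)
    (h₁ : F.map coprod.inr ≫ φ = F.map coprod.inr ≫ ψ) : φ = ψ :=
  BinaryCofan.IsColimit.hom_ext (isColimitOfHasBinaryCoproductOfPreservesColimit F X Y) h₀ h₁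

end PreservesCoproduct

namespace Cylinder

variable (E : Cylinder C)

lemma d0_σ_assoc {T D : C} (x : T ⟶ D) : E.d0.app T ≫ E.σ.app T ≫ x = x := by
  rw [← Category.assoc, E.d0_σ]
  exact Category.id_comp x

lemma d1_σ_assoc {T D : C} (x : T ⟶ D) : E.d1.app T ≫ E.σ.app T ≫ x = x := by
  rw [← Category.assoc, E.d1_σ]
  exact Category.id_comp x

lemma map_d0_map_σ_assoc {T D : C} (x : E.I.obj T ⟶ D) :
    E.I.map (E.d0.app T) ≫ E.I.map (E.σ.app T) ≫ x = x := by
  rw [← E.I.map_comp_assoc, E.d0_σ]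
  simp

lemma map_d1_map_σ_assoc {T D : C} (x : E.I.obj T ⟶ D) :
    E.I.map (E.d1.app T) ≫ E.I.map (E.σ.app T) ≫ x = x := by
  rw [← E.I.map_comp_assoc, E.d1_σ]
  simp

lemma d0_naturality_assoc {K M D : C} (f : K ⟶ M) (x : E.I.obj M ⟶ D) :
    f ≫ E.d0.app M ≫ x = E.d0.app K ≫ E.I.map f ≫ x := by
  rw [← Category.assoc, E.d0_naturality', Category.assoc]

lemma d1_naturality_assoc {K M D : C} (f : K ⟶ M) (x : E.I.obj M ⟶ D) :
    f ≫ E.d1.app M ≫ x = E.d1.app K ≫ E.I.map f ≫ x := by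
  rw [← Category.assoc, E.d1_naturality', Category.assoc]

lemma σ_naturality_assoc {K M D : C} (f : K ⟶ M) (x : M ⟶ D) :
    E.I.map f ≫ E.σ.app M ≫ x = E.σ.app K ≫ f ≫ x := by
  simp

variable [HasColimits C]

lemma inl_ι_assoc {T D : C} (x : E.I.obj T ⟶ D) : coprod.inl ≫ E.ι T ≫ x = E.d0.app T ≫ x :=
  coprod.inl_desc_assoc _ _ x

lemma inr_ι_assoc {T D : C} (x : E.I.obj T ⟶ D) : coprod.inr ≫ E.ι T ≫ x = E.d1.app T ≫ x :=
  coprod.inr_desc_assoc _ _ x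

lemma inl_boundaryBox_assoc {K M D : C} (j : K ⟶ M) (x : E.I.obj M ⟶ D) :
    pushout.inl _ _ ≫ E.boundaryBox j ≫ x = E.ι M ≫ x :=
  pushout.inl_desc_assoc _ _ _ x

lemma inr_boundaryBox_assoc {K M D : C} (j : K ⟶ M) (x : E.I.obj M ⟶ D) :
    pushout.inr _ _ ≫ E.boundaryBox j ≫ x = E.I.map j ≫ x :=
  pushout.inr_desc_assoc _ _ _ x

lemma inl_box1_assoc {K M D : C} (j : K ⟶ M) (x : E.I.obj M ⟶ D) :
    pushout.inl _ _ ≫ E.box1 j ≫ x = E.d1.app M ≫ x :=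
  pushout.inl_desc_assoc _ _ _ x

lemma inr_box1_assoc {K M D : C} (j : K ⟶ M) (x : E.I.obj M ⟶ D) :
    pushout.inr _ _ ≫ E.box1 j ≫ x = E.I.map j ≫ x :=
  pushout.inr_desc_assoc _ _ _ x

lemma exists_lift_boundaryBox {K M W V : C} {j : K ⟶ M} {q : W ⟶ V}
    [HasLiftingProperty (E.boundaryBox j) q]
    {g₀ g₁ : M ⟶ W} {h : E.I.obj K ⟶ W} {β : E.I.obj M ⟶ V}
    (h₀ : j ≫ g₀ = E.d0.app K ≫ h) (h₁ : j ≫ g₁ = E.d1.app K ≫ h)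
    (hg₀ : g₀ ≫ q = E.d0.app M ≫ β) (hg₁ : g₁ ≫ q = E.d1.app M ≫ β)
    (hh : h ≫ q = E.I.map j ≫ β) :
    ∃ G : E.I.obj M ⟶ W, E.d0.app M ≫ G = g₀ ∧ E.d1.app M ≫ G = g₁ ∧
      E.I.map j ≫ G = h ∧ G ≫ q = β := by
  have hι : coprod.map j j ≫ coprod.desc g₀ g₁ = E.ι K ≫ h := by
    ext <;> simp only [coprod.inl_map_assoc, coprod.inr_map_assoc, coprod.inl_desc,
      coprod.inr_desc, inl_ι_assoc, inr_ι_assoc, h₀, h₁]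
  have sq : CommSq (pushout.desc (coprod.desc g₀ g₁) h hι) (E.boundaryBox j) q β :=
    ⟨by ext <;> simp only [pushout.inl_desc_assoc, pushout.inr_desc_assoc,
      coprod.inl_desc_assoc, coprod.inr_desc_assoc, inl_boundaryBox_assoc, inr_boundaryBox_assoc,
      inl_ι_assoc, inr_ι_assoc, hg₀, hg₁, hh]⟩
  have fac := sq.fac_left
  refine ⟨sq.lift, ?_, ?_, ?_, sq.fac_right⟩
  · simpa only [inl_boundaryBox_assoc, inl_ι_assoc, pushout.inl_desc, coprod.inl_desc]
      using congr_arg (coprod.inl ≫ pushout.inl _ _ ≫ ·) fac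
  · simpa only [inl_boundaryBox_assoc, inr_ι_assoc, pushout.inl_desc, coprod.inr_desc]
      using congr_arg (coprod.inr ≫ pushout.inl _ _ ≫ ·) fac
  · simpa only [inr_boundaryBox_assoc, pushout.inr_desc]
      using congr_arg (pushout.inr _ _ ≫ ·) fac

lemma exists_lift_box1 {K M W V : C} {j : K ⟶ M} {q : W ⟶ V}
    [HasLiftingProperty (E.box1 j) q]
    {g : M ⟶ W} {h : E.I.obj K ⟶ W} {β : E.I.obj M ⟶ V}
    (hgh : j ≫ g = E.d1.app K ≫ h) (hg : g ≫ q = E.d1.app M ≫ β)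
    (hh : h ≫ q = E.I.map j ≫ β) :
    ∃ G : E.I.obj M ⟶ W, E.d1.app M ≫ G = g ∧ E.I.map j ≫ G = h ∧ G ≫ q = β := by
  have sq : CommSq (pushout.desc g h hgh) (E.box1 j) q β :=
    ⟨by ext <;> simp only [pushout.inl_desc_assoc, pushout.inr_desc_assoc, inl_box1_assoc,
      inr_box1_assoc, hg, hh]⟩
  have fac := sq.fac_left
  refine ⟨sq.lift, ?_, ?_, sq.fac_right⟩
  · simpa only [inl_box1_assoc, pushout.inl_desc] using congr_arg (pushout.inl _ _ ≫ ·) fac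
  · simpa only [inr_box1_assoc, pushout.inr_desc] using congr_arg (pushout.inr _ _ ≫ ·) fac

lemma map_inl_map_ι_assoc {T D : C} (x : E.I.obj (E.I.obj T) ⟶ D) :
    E.I.map coprod.inl ≫ E.I.map (E.ι T) ≫ x = E.I.map (E.d0.app T) ≫ x := by
  rw [← E.I.map_comp_assoc, ι, coprod.inl_desc]

lemma map_inr_map_ι_assoc {T D : C} (x : E.I.obj (E.I.obj T) ⟶ D) :
    E.I.map coprod.inr ≫ E.I.map (E.ι T) ≫ x = E.I.map (E.d1.app T) ≫ x := by
  rw [← E.I.map_comp_assoc, ι, coprod.inr_desc]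

lemma exists_connection {T W A : C} [PreservesColimit (pair T T) E.I] {q : W ⟶ A}
    [HasLiftingProperty (E.box1 (E.ι T)) q] {g : T ⟶ W} {H : E.I.obj T ⟶ W}
    (hH : E.d1.app T ≫ H = g) (hHq : H ≫ q = E.σ.app T ≫ g ≫ q) :
    ∃ Ξ : E.I.obj (E.I.obj T) ⟶ W, E.d1.app (E.I.obj T) ≫ Ξ = E.σ.app T ≫ g ∧
      E.I.map (E.d0.app T) ≫ Ξ = E.σ.app T ≫ g ∧ E.I.map (E.d1.app T) ≫ Ξ = H ∧
      Ξ ≫ q = E.σ.app (E.I.obj T) ≫ E.σ.app T ≫ g ≫ q := by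
  obtain ⟨K, hK₀, hK₁⟩ := E.I.exists_map_coprod_desc (E.σ.app T ≫ g) H
  obtain ⟨Ξ, hΞ₁, hΞι, hΞq⟩ := E.exists_lift_box1 (j := E.ι T) (g := E.σ.app T ≫ g)
    (h := K) (q := q) (β := E.σ.app (E.I.obj T) ≫ E.σ.app T ≫ g ≫ q)
    (by ext <;> simp only [inl_ι_assoc, inr_ι_assoc, d0_σ_assoc, d1_σ_assoc,
      d1_naturality_assoc, hK₀, hK₁, hH])
    (by rw [Category.assoc, d1_σ_assoc])
    -- The components of `d0`, `d1`, `σ` live on `(𝟭 C).obj T`; `Functor.id_obj` rewrites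
    -- these objects back to `T` so that the remaining lemmas match syntactically.
    (E.I.map_coprod_hom_ext
        (by simp only [reassoc_of% hK₀, σ_naturality_assoc, Functor.id_obj, inl_ι_assoc,
        d0_σ_assoc])
      (by simp only [reassoc_of% hK₁, σ_naturality_assoc, Functor.id_obj, inr_ι_assoc,
        d1_σ_assoc, hHq]))
  refine ⟨Ξ, hΞ₁, ?_, ?_, hΞq⟩
  · rw [← map_inl_map_ι_assoc, hΞι, hK₀]
  · rw [← map_inr_map_ι_assoc, hΞι, hK₁]

lemma exists_square_filler {T W V : C} {q : W ⟶ V}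
    [HasLiftingProperty (E.boundaryBox (E.d1.app T)) q]
    {m₀ m₁ h : E.I.obj T ⟶ W} {β : E.I.obj (E.I.obj T) ⟶ V}
    (h₀ : E.d1.app T ≫ m₀ = E.d0.app T ≫ h) (h₁ : E.d1.app T ≫ m₁ = E.d1.app T ≫ h)
    (hm₀ : m₀ ≫ q = E.d0.app (E.I.obj T) ≫ β) (hm₁ : m₁ ≫ q = E.d1.app (E.I.obj T) ≫ β)
    (hh : h ≫ q = E.I.map (E.d1.app T) ≫ β) :
    ∃ N : E.I.obj T ⟶ W, E.d0.app T ≫ N = E.d0.app T ≫ m₀ ∧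
      E.d1.app T ≫ N = E.d0.app T ≫ m₁ ∧ N ≫ q = E.I.map (E.d0.app T) ≫ β := by
  obtain ⟨G, hG₀, hG₁, -, hGq⟩ := E.exists_lift_boundaryBox h₀ h₁ hm₀ hm₁ hh
  refine ⟨E.I.map (E.d0.app T) ≫ G, ?_, ?_, by rw [Category.assoc, hGq]⟩
  · rw [← d0_naturality_assoc, hG₀]
  · rw [← d1_naturality_assoc, hG₁]

section OverHomotopy

variable {T A W : C} {c : T ⟶ A} {q : W ⟶ A}

lemma overHomotopy_refl (g : OverHom c q) : E.OverHomotopy c q g g :=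
  ⟨E.σ.app T ≫ g.1, E.d0_σ_assoc g.1, E.d1_σ_assoc g.1, by rw [Category.assoc, g.2]⟩

variable [HasLiftingProperty (E.boundaryBox (E.d1.app T)) q]

lemma overHomotopy_of_common_target {u v w : OverHom c q}
    (hv : E.OverHomotopy c q v u) (hw : E.OverHomotopy c q w u) : E.OverHomotopy c q v w := by
  obtain ⟨H, hH₀, hH₁, hHq⟩ := hv
  obtain ⟨K, hK₀, hK₁, hKq⟩ := hw
  obtain ⟨N, hN₀, hN₁, hNq⟩ := E.exists_square_filler (q := q) (m₀ := H) (m₁ := K)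
    (h := E.σ.app T ≫ u.1) (β := E.I.map (E.σ.app T) ≫ E.σ.app T ≫ c)
    (by rw [hH₁, d0_σ_assoc]) (by rw [hK₁, d1_σ_assoc])
    (by simp only [hHq, ← d0_naturality_assoc, Functor.id_obj, d0_σ_assoc])
    (by simp only [hKq, ← d1_naturality_assoc, Functor.id_obj, d1_σ_assoc])
    (by rw [Category.assoc, u.2, map_d1_map_σ_assoc])
  exact ⟨N, by rw [hN₀, hH₀], by rw [hN₁, hK₀], by rw [hNq, map_d0_map_σ_assoc]⟩

lemma overHomotopy_equivalence : Equivalence (E.OverHomotopy c q) :=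
  have symm {g g' : OverHom c q} (h : E.OverHomotopy c q g g') : E.OverHomotopy c q g' g :=
    E.overHomotopy_of_common_target (E.overHomotopy_refl g') h
  ⟨E.overHomotopy_refl, symm, fun h h' =>
    E.overHomotopy_of_common_target h (symm h')⟩

lemma overHomotopy_of_quot_mk_eq {g g' : OverHom c q}
    (h : (Quot.mk _ g : E.OverHoHom c q) = Quot.mk _ g') : E.OverHomotopy c q g g' :=
  E.overHomotopy_equivalence.eqvGen_iff.1 (Quot.eqvGen_exact h)

end OverHomotopy

lemma hasLiftingProperty_of_surjective_overPrecompQ {K M W V : C} {j : K ⟶ M} {q : W ⟶ V}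
    [HasLiftingProperty (E.box1 j) q] [HasLiftingProperty (E.boundaryBox (E.d1.app K)) q]
    (hj : ∀ b : M ⟶ V, Function.Surjective (E.overPrecompQ j b q)) :
    HasLiftingProperty j q := by
  refine ⟨fun {u b} sq => ?_⟩
  obtain ⟨x, hx⟩ := hj b (Quot.mk _ ⟨u, sq.w⟩)
  induction x using Quot.ind with | mk g => ?_
  obtain ⟨N, hN₀, hN₁, hNq⟩ := E.overHomotopy_of_quot_mk_eq hx.symm
  obtain ⟨Θ, hΘ₁, hΘj, hΘq⟩ := E.exists_lift_box1 (g := g.1) hN₁.symm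
    (β := E.σ.app M ≫ b) (by rw [g.2, d1_σ_assoc]) (by rw [hNq, σ_naturality_assoc])
  exact ⟨⟨E.d0.app M ≫ Θ, by rw [d0_naturality_assoc, hΘj, hN₀],
    by rw [Category.assoc, hΘq, d0_σ_assoc]⟩⟩

end Cylinder

lemma isFib_of_eq_llp {An T : MorphismProperty C} (hAn : An = llp T) {W V : C} {q : W ⟶ V}
    (hq : T q) : IsFib An q := by
  intro A B i hi
  rw [hAn] at hi
  exact hi q hq

namespace IsRightAnodyneClass

variable [HasColimits C] {E : Cylinder C} {L An : MorphismProperty C}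

lemma mem_of_hasLiftingProperty (hAn : IsRightAnodyneClass E L An) {K M : C} {j : K ⟶ M}
    (hj : ∀ ⦃W V : C⦄ (q : W ⟶ V), IsFib An q → HasLiftingProperty j q) : An j := by
  obtain ⟨Λ, -, -, hΛ⟩ := hAn.exists_generating_set
  rw [hΛ]
  exact fun W V q hq => hj q (isFib_of_eq_llp hΛ hq)

lemma d1_mem (hAn : IsRightAnodyneClass E L An) (hE : IsExactCylinder E L)
    (hinit : ∀ X : C, L (initial.to X)) (T : C) : An (E.d1.app T) := by
  have := hE.preservesColimits
  have : IsIso (E.d1.app (⊥_ C)) :=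
    isIso_of_isInitial initialIsInitial (IsInitial.isInitialObj E.I _ initialIsInitial) _
  have hbox : pushout.inl _ _ ≫ E.box1 (initial.to T) = E.d1.app T := pushout.inl_desc _ _ _
  refine hAn.mem_of_hasLiftingProperty fun W V q hq => ?_
  have := hq _ (hAn.box1_mem _ (hinit T))
  rw [← hbox]
  infer_instance

end IsRightAnodyneClass

lemma exists_section_of_rlp [HasColimits C] {L : MorphismProperty C} {Z Y : C} {p : Z ⟶ Y}
    (hp : rlp L p) (hinit : L (initial.to Y)) : ∃ s : Y ⟶ Z, s ≫ p = 𝟙 Y := by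
  have := hp _ hinit
  have sq : CommSq (initial.to Z) (initial.to Y) p (𝟙 Y) := ⟨initial.hom_ext _ _⟩
  exact ⟨sq.lift, sq.fac_right⟩

namespace Cylinder

variable (E : Cylinder C) [HasColimits C]

section Backward

lemma exists_overHomotopy_id_section {Z Y : C} {p : Z ⟶ Y} [HasLiftingProperty (E.ι Z) p]
    {s : Y ⟶ Z} (hs : s ≫ p = 𝟙 Y) :
    ∃ K : E.I.obj Z ⟶ Z, E.d0.app Z ≫ K = 𝟙 Z ∧ E.d1.app Z ≫ K = p ≫ s ∧
      K ≫ p = E.σ.app Z ≫ p := by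
  have sq : CommSq (coprod.desc (𝟙 Z) (p ≫ s)) (E.ι Z) p (E.σ.app Z ≫ p) :=
    ⟨by ext <;> simp only [coprod.inl_desc_assoc, coprod.inr_desc_assoc, inl_ι_assoc,
      inr_ι_assoc, d0_σ_assoc, d1_σ_assoc, Category.id_comp, Category.assoc, hs,
      Category.comp_id]⟩
  have fac := sq.fac_left
  refine ⟨sq.lift, ?_, ?_, sq.fac_right⟩
  · simpa only [inl_ι_assoc, coprod.inl_desc] using congr_arg (coprod.inl ≫ ·) fac
  · simpa only [inr_ι_assoc, coprod.inr_desc] using congr_arg (coprod.inr ≫ ·) fac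

variable {X Y Z A W : C} {i : X ⟶ Z} {p : Z ⟶ Y} {s : Y ⟶ Z} (a : Y ⟶ A) {q : W ⟶ A}

lemma injective_overPrecompQ_comp [HasLiftingProperty (E.boundaryBox i) q]
    [HasLiftingProperty (E.boundaryBox (E.d1.app X)) q] (hs : s ≫ p = 𝟙 Y) :
    Function.Injective (E.overPrecompQ (i ≫ p) a q) := by
  intro x x' hxx'
  induction x using Quot.ind with | mk g => ?_
  induction x' using Quot.ind with | mk g' => ?_
  obtain ⟨N, hN₀, hN₁, hNq⟩ := E.overHomotopy_of_quot_mk_eq hxx'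
  obtain ⟨G, hG₀, hG₁, -, hGq⟩ := E.exists_lift_boundaryBox (j := i) (q := q) (h := N)
    (g₀ := p ≫ g.1) (g₁ := p ≫ g'.1) (β := E.σ.app Z ≫ p ≫ a)
    (by simp only [hN₀, Category.assoc]) (by simp only [hN₁, Category.assoc])
    (by rw [Category.assoc, g.2, d0_σ_assoc]) (by rw [Category.assoc, g'.2, d1_σ_assoc])
    (by rw [hNq, σ_naturality_assoc, Category.assoc])
  have hsp {D : C} (x : Y ⟶ D) : s ≫ p ≫ x = x := by rw [reassoc_of% hs]
  refine Quot.sound ⟨E.I.map s ≫ G, ?_, ?_, ?_⟩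
  · rw [← d0_naturality_assoc, hG₀, hsp]
  · rw [← d1_naturality_assoc, hG₁, hsp]
  · rw [Category.assoc, hGq, σ_naturality_assoc, hsp]

lemma surjective_overPrecompQ_comp [HasLiftingProperty i q] [HasLiftingProperty (E.ι Z) p]
    (hs : s ≫ p = 𝟙 Y) : Function.Surjective (E.overPrecompQ (i ≫ p) a q) := by
  intro x
  induction x using Quot.ind with | mk g => ?_
  obtain ⟨K, hK₀, hK₁, hKp⟩ := E.exists_overHomotopy_id_section hs
  have sq : CommSq g.1 i q (p ≫ a) := ⟨by rw [g.2, Category.assoc]⟩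
  have hl : (s ≫ sq.lift) ≫ q = a := by rw [Category.assoc, sq.fac_right, reassoc_of% hs]
  refine ⟨Quot.mk _ ⟨s ≫ sq.lift, hl⟩,
    (Quot.sound ⟨E.I.map i ≫ K ≫ sq.lift, ?_, ?_, ?_⟩).symm⟩
  · rw [← d0_naturality_assoc, reassoc_of% hK₀, sq.fac_left]
  · show _ = (i ≫ p) ≫ s ≫ sq.lift
    rw [← d1_naturality_assoc, reassoc_of% hK₁]
    exact (Category.assoc _ _ _).symm
  · rw [Category.assoc, Category.assoc, sq.fac_right, reassoc_of% hKp, σ_naturality_assoc,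
      Category.assoc]

end Backward

variable {L An : MorphismProperty C}

lemma exists_homotopy_lift_of_isFinal {X Y V W : C} {f : X ⟶ Y} (hfin : IsFinal E An f)
    {q : W ⟶ V} (hq : IsFib An q) [HasLiftingProperty (E.d1.app X) q]
    [HasLiftingProperty (E.boundaryBox (E.d1.app X)) q] {K : E.I.obj X ⟶ V} {c : Y ⟶ V}
    (hK : E.d0.app X ≫ K = f ≫ c) {u : X ⟶ W} (hu : u ≫ q = E.d1.app X ≫ K) :
    ∃ y : Y ⟶ W, y ≫ q = c ∧ ∃ v : E.I.obj X ⟶ W,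
      E.d0.app X ≫ v = f ≫ y ∧ E.d1.app X ≫ v = u ∧ v ≫ q = K := by
  have sq : CommSq u (E.d1.app X) q K := ⟨hu⟩
  have hu₀ : (E.d0.app X ≫ sq.lift) ≫ q = f ≫ c := by rw [Category.assoc, sq.fac_right, hK]
  obtain ⟨x, hx⟩ := (hfin V c q hq).2 (Quot.mk _ ⟨_, hu₀⟩)
  induction x using Quot.ind with | mk y => ?_
  obtain ⟨M, hM₀, hM₁, hMq⟩ := E.overHomotopy_of_quot_mk_eq hx
  obtain ⟨v, hv₀, hv₁, hvq⟩ := E.exists_square_filler (q := q) (m₀ := M)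
    (m₁ := E.σ.app X ≫ u) (h := sq.lift) (β := E.I.map (E.σ.app X) ≫ K) hM₁
    (by rw [d1_σ_assoc, sq.fac_left])
    (by simp only [hMq, ← d0_naturality_assoc, Functor.id_obj, hK])
    (by simp only [Category.assoc, hu, ← d1_naturality_assoc, Functor.id_obj])
    (by rw [sq.fac_right, map_d1_map_σ_assoc])
  exact ⟨y.1, y.2, v, hv₀.trans hM₀, by rw [hv₁, d0_σ_assoc],
    by rw [hvq, map_d0_map_σ_assoc]⟩

/-- `H : j ≫ p ≫ t ~ j` is reversed by `d0 ≫ Ξ` (the 2-cell `Ξ` says the round trip is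
constant), and `K : 𝟙 ~ p ≫ t` restricts along `j` to that reverse. -/
lemma surjective_overPrecompQ_of_retraction {X Y Z V W : C} {j : X ⟶ Z} {p : Z ⟶ Y}
    (hfin : IsFinal E An (j ≫ p)) {t : Y ⟶ Z} {H : E.I.obj X ⟶ Z}
    (hH₀ : E.d0.app X ≫ H = (j ≫ p) ≫ t) (hH₁ : E.d1.app X ≫ H = j)
    {Ξ : E.I.obj (E.I.obj X) ⟶ Z} (hΞ₁ : E.d1.app (E.I.obj X) ≫ Ξ = E.σ.app X ≫ j)
    (hΞ₀' : E.I.map (E.d0.app X) ≫ Ξ = E.σ.app X ≫ j) (hΞ₁' : E.I.map (E.d1.app X) ≫ Ξ = H)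
    {K : E.I.obj Z ⟶ Z} (hK₀ : E.d0.app Z ≫ K = 𝟙 Z) (hK₁ : E.d1.app Z ≫ K = p ≫ t)
    (hKj : E.I.map j ≫ K = E.d0.app (E.I.obj X) ≫ Ξ) (b : Z ⟶ V) {q : W ⟶ V}
    (hq : IsFib An q) [HasLiftingProperty (E.d1.app X) q]
    [HasLiftingProperty (E.boundaryBox (E.d1.app X)) q] [HasLiftingProperty (E.box1 j) q] :
    Function.Surjective (E.overPrecompQ j b q) := by
  intro x
  induction x using Quot.ind with | mk u => ?_
  obtain ⟨y, hy, v, hv₀, hv₁, hvq⟩ := E.exists_homotopy_lift_of_isFinal hfin hq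
    (K := H ≫ b) (c := t ≫ b) (by simp only [reassoc_of% hH₀, Category.assoc]) (u := u.1)
    (by rw [u.2, reassoc_of% hH₁])
  have sq : CommSq ((j ≫ p) ≫ y) (E.d1.app X) q (E.d0.app (E.I.obj X) ≫ Ξ ≫ b) :=
    ⟨by simp only [d0_naturality_assoc, reassoc_of% hΞ₁', reassoc_of% hH₀, Category.assoc, hy]⟩
  obtain ⟨Θ, hΘ₁, hΘj, hΘq⟩ := E.exists_lift_box1 (j := j) (q := q) (g := p ≫ y) (h := sq.lift)
    (β := K ≫ b)
    (by rw [sq.fac_left, Category.assoc]) (by rw [Category.assoc, hy, reassoc_of% hK₁])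
    (by rw [sq.fac_right, reassoc_of% hKj])
  have hg : (E.d0.app Z ≫ Θ) ≫ q = b := by rw [Category.assoc, hΘq, reassoc_of% hK₀]
  obtain ⟨N, hN₀, hN₁, hNq⟩ := E.exists_square_filler (q := q) (m₀ := sq.lift)
    (m₁ := E.σ.app X ≫ u.1) (h := v) (β := Ξ ≫ b) (by rw [sq.fac_left, hv₀])
    (by rw [d1_σ_assoc, hv₁]) sq.fac_right (by rw [Category.assoc, u.2, reassoc_of% hΞ₁])
    (by rw [hvq, reassoc_of% hΞ₁'])
  refine ⟨Quot.mk _ ⟨E.d0.app Z ≫ Θ, hg⟩, Quot.sound ⟨N, ?_, ?_, ?_⟩⟩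
  · show _ = j ≫ E.d0.app Z ≫ Θ
    rw [hN₀, d0_naturality_assoc, hΘj]
  · rw [hN₁, d0_σ_assoc]
  · rw [hNq, reassoc_of% hΞ₀']

lemma surjective_overPrecompQ_of_isFinal_comp (hE : IsExactCylinder E L)
    (hAn : IsRightAnodyneClass E L An) (hd1 : ∀ T : C, An (E.d1.app T)) {X Y Z : C}
    {j : X ⟶ Z} {p : Z ⟶ Y} (hj : L j) (hp : rlp L p) (hfin : IsFinal E An (j ≫ p))
    {V W : C} (b : Z ⟶ V) {q : W ⟶ V} (hq : IsFib An q) :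
    Function.Surjective (E.overPrecompQ j b q) := by
  have hpAn : IsFib An p := fun _ _ i hi => hp i (hAn.le i hi)
  have := hE.preservesColimits
  have := hp _ (hE.box1_mem _ (hE.ι_mem X))
  have := hp _ (hE.boundaryBox_mem j hj)
  have := hpAn _ (hAn.boundaryBox_mem _ (hd1 X))
  have := hq _ (hd1 X)
  have := hq _ (hAn.boundaryBox_mem _ (hd1 X))
  have := hq _ (hAn.box1_mem j hj)
  obtain ⟨x, hx⟩ := (hfin Y (𝟙 Y) p hpAn).2 (Quot.mk _ ⟨j, (Category.comp_id _).symm⟩)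
  induction x using Quot.ind with | mk t => ?_
  obtain ⟨t, ht⟩ := t
  obtain ⟨H, hH₀, hH₁, hHp⟩ := E.overHomotopy_of_quot_mk_eq hx
  dsimp only at hH₀ hH₁
  obtain ⟨Ξ, hΞ₁, hΞ₀', hΞ₁', hΞp⟩ := E.exists_connection (q := p) hH₁
    (by rw [hHp, Category.comp_id])
  obtain ⟨K, hK₀, hK₁, hKj, -⟩ := E.exists_lift_boundaryBox (j := j) (q := p) (g₀ := 𝟙 Z)
    (g₁ := p ≫ t) (h := E.d0.app _ ≫ Ξ) (β := E.σ.app Z ≫ p)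
    (by simp only [d0_naturality_assoc, hΞ₀', Functor.id_obj, d0_σ_assoc, Category.comp_id])
    (by simp only [d0_naturality_assoc, hΞ₁', Functor.id_obj, hH₀, Category.assoc])
    (by rw [Category.id_comp, d0_σ_assoc])
    (by rw [Category.assoc, ht, Category.comp_id, d1_σ_assoc])
    (by rw [Category.assoc, hΞp, d0_σ_assoc, σ_naturality_assoc])
  exact E.surjective_overPrecompQ_of_retraction hfin hH₀ hH₁ hΞ₁ hΞ₀' hΞ₁' hK₀ hK₁ hKj b hq

end Cylinder

/-- Proposition 3.9 (leftcancel): a map is `I`-final iff it factors as a right `I`-anodyne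
extension followed by a map in `R`. -/
theorem statement_13    {C : Type u} [Category.{v} C] [LocallyPresentable C]
    (L R : MorphismProperty C) (hW : IsCofGenWFS L R)
    (E : Cylinder C) (hE : IsExactCylinder E L)
    (An : MorphismProperty C) (hAn : IsRightAnodyneClass E L An)
    ⦃X Y : C⦄ (f : X ⟶ Y) :
    IsFinal E An f ↔
      ∃ (Z : C) (i : X ⟶ Z) (p : Z ⟶ Y), An i ∧ R p ∧ i ≫ p = f := by
  have hd1 := hAn.d1_mem hE hW.initial_mem
  have hR {Z Y : C} {p : Z ⟶ Y} (hp : R p) : rlp L p := hW.rlp_eq ▸ hp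
  constructor
  · intro hfin
    obtain ⟨Z, j, p, hj, hp, rfl⟩ := hW.factorization f
    refine ⟨Z, j, p, hAn.mem_of_hasLiftingProperty fun W V q hq => ?_, hp, rfl⟩
    have := hq _ (hAn.box1_mem j hj)
    have := hq _ (hAn.boundaryBox_mem _ (hd1 X))
    exact E.hasLiftingProperty_of_surjective_overPrecompQ fun b =>
      E.surjective_overPrecompQ_of_isFinal_comp hE hAn hd1 hj (hR hp) hfin b hq
  · rintro ⟨Z, i, p, hi, hp, rfl⟩ A a W q hq
    obtain ⟨s, hs⟩ := exists_section_of_rlp (hR hp) (hW.initial_mem Y)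
    have := hq _ hi
    have := hq _ (hAn.boundaryBox_mem i hi)
    have := hq _ (hAn.boundaryBox_mem _ (hd1 X))
    have := hR hp _ (hE.ι_mem Z)
    exact ⟨E.injective_overPrecompQ_comp a hs, E.surjective_overPrecompQ_comp a hs⟩

end Paper
end
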